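/- Let r ≥ 1 and let n_1, …, n_r be positive integers, and let N ≥ 2 be divisible by each n_i with N/n_i ≥ 2 for all i. Let S be the set of tuples f = (f_1, …, f_r) where f_i : Fin N → Fin n_i and every fiber of each f_i has exactly N/n_i elements. Fix a label v, set α(f) = #{ j : f_i(j) = v_i for all i }, and let av = N / ∏_{i=1}^r n_i. Then the variance (1/|S|) · ∑_{f ∈ S} (α(f) − av)² equals, as a rational number, N/∏_{i=1}^r n_i − N²/∏_{i=1}^r n_i² + N(N−1) · ∏_{i=1}^r (N − n_i)/( n_i² (N − 1) ). -/

import Mathlib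

/-!
Write `α(f) = ∑ⱼ ∏ᵢ [fᵢ(j) = vᵢ]`. The rounds are independent, so summing a product over `S`
factorises round by round, and `∑_f α(f)` and `∑_f α(f)²` reduce to counting, in a single
round, the balanced maps sending one ball, resp. two distinct balls, into a given pot.
Permuting the balls shows that these counts do not depend on the balls, and double counting
then gives the proportions `m/N` and `m(m-1)/(N(N-1))`, where `m = N/nᵢ`. Hence `α` has mean
`av` and second moment `av + N(N-1) ∏ᵢ m(m-1)/(N(N-1))`, and the variance is their
difference with `av²`.
-/

open Finset

theorem sum_sub_sq_eq {Ω R : Type*} [Fintype Ω] [CommRing R] (x : Ω → R) (c : R) :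
    ∑ ω, (x ω - c) ^ 2 = ∑ ω, x ω ^ 2 - 2 * c * ∑ ω, x ω + Fintype.card Ω * c ^ 2 := by
  have h (ω : Ω) : (x ω - c) ^ 2 = x ω ^ 2 - 2 * c * x ω + c ^ 2 := by ring
  simp only [h, sum_add_distrib, sum_sub_distrib, ← mul_sum, sum_const, card_univ, nsmul_eq_mul]

theorem sum_sum_eq_of_diag_of_offDiag {γ R : Type*} [Fintype γ] [DecidableEq γ] [CommRing R]
    {h : γ → γ → R} {d e : R} (hd : ∀ j, h j j = d) (he : ∀ j k, j ≠ k → h j k = e) :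
    ∑ j, ∑ k, h j k = Fintype.card γ * d + Fintype.card γ * (Fintype.card γ - 1) * e := by
  have hsplit (j k : γ) : h j k = e + if j = k then d - e else 0 := by
    split_ifs with hjk
    · subst hjk; rw [hd]; ring
    · rw [he j k hjk, add_zero]
  simp only [hsplit, sum_add_distrib, sum_ite_eq, mem_univ, if_true, sum_const, card_univ,
    nsmul_eq_mul]
  ring

theorem prod_Icc_one_eq_prod_fin {M : Type*} [CommMonoid M] (f : ℕ → M) (r : ℕ) :
    ∏ i ∈ Icc 1 r, f i = ∏ i : Fin r, f (i + 1) := by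
  rw [Fin.prod_univ_eq_prod_range (fun i => f (i + 1)), range_eq_Ico, prod_Ico_add',
    zero_add, Ico_add_one_right_eq_Icc]

section IndependentRounds

variable {ι γ : Type*} [Fintype ι] [DecidableEq ι] {X : ι → Type*} [∀ i, Fintype (X i)]
  [Fintype γ] (E : ∀ i, X i → γ → Prop) [∀ i x j, Decidable (E i x j)]

theorem sum_card_filter_forall :
    ∑ g : ∀ i, X i, (univ.filter fun j => ∀ i, E i (g i) j).card =
      ∑ j, ∏ i, (univ.filter fun x => E i x j).card := by
  simp only [card_filter]
  rw [sum_comm]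
  refine sum_congr rfl fun j _ => ?_
  rw [Fintype.prod_sum]
  simp only [prod_boole, mem_univ, true_implies]

theorem sum_card_filter_forall_sq :
    ∑ g : ∀ i, X i, (univ.filter fun j => ∀ i, E i (g i) j).card ^ 2 =
      ∑ j, ∑ k, ∏ i, (univ.filter fun x => E i x j ∧ E i x k).card := by
  have hsq (g : ∀ i, X i) : (univ.filter fun j => ∀ i, E i (g i) j).card ^ 2 =
      (univ.filter fun p : γ × γ => ∀ i, E i (g i) p.1 ∧ E i (g i) p.2).card := by
    rw [sq, ← card_product, ← filter_product, univ_product_univ]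
    simp only [forall_and]
  simp only [hsq, sum_card_filter_forall (fun i x (p : γ × γ) => E i x p.1 ∧ E i x p.2),
    Fintype.sum_prod_type]

end IndependentRounds

abbrev BalancedMap (α β : Type*) [Fintype α] [DecidableEq β] (m : ℕ) :=
  {f : α → β // ∀ b : β, (univ.filter fun a => f a = b).card = m}

namespace BalancedMap

section SingleRound

variable {α β : Type*} [Fintype α] [Fintype β] [DecidableEq β] {m : ℕ}

theorem nonempty_of_card_eq (h : Fintype.card α = Fintype.card β * m) :
    Nonempty (BalancedMap α β m) := by
  let e : α ≃ β × Fin m := Fintype.equivOfCardEq (by simp [h])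
  refine ⟨⟨fun a => (e a).1, fun b => ?_⟩⟩
  rw [card_filter, Fintype.sum_equiv e _ (fun p => if p.1 = b then 1 else 0) (fun _ => rfl),
    Fintype.sum_prod_type]
  simp [apply_ite]

variable [DecidableEq α]

def compPerm (σ : Equiv.Perm α) : BalancedMap α β m ≃ BalancedMap α β m :=
  Equiv.subtypeEquiv (σ.symm.arrowCongr (Equiv.refl β)) fun f => by
    refine forall_congr' fun b => ?_
    simp only [Equiv.arrowCongr_apply, Equiv.coe_refl, Equiv.symm_symm, Function.comp_apply, id]
    rw [card_filter, card_filter, Fintype.sum_equiv σ _ (fun a => if f a = b then 1 else 0)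
      (fun _ => rfl)]

theorem card_filter_comp_perm (σ : Equiv.Perm α) (p : (α → β) → Prop) [DecidablePred p] :
    (univ.filter fun f : BalancedMap α β m => p (f.1 ∘ σ)).card =
      (univ.filter fun f : BalancedMap α β m => p f.1).card := by
  rw [card_filter, card_filter]
  exact Fintype.sum_equiv (compPerm σ) _ _ fun _ => rfl

theorem card_filter_apply_eq_congr (a a' : α) (b : β) :
    (univ.filter fun f : BalancedMap α β m => f.1 a = b).card =
      (univ.filter fun f : BalancedMap α β m => f.1 a' = b).card := by
  simpa using card_filter_comp_perm (m := m) (Equiv.swap a a') (fun g => g a' = b)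

theorem card_filter_apply_eq_and_apply_eq_congr {a a' a'' : α} (ha' : a ≠ a') (ha'' : a ≠ a'')
    (b : β) :
    (univ.filter fun f : BalancedMap α β m => f.1 a = b ∧ f.1 a' = b).card =
      (univ.filter fun f : BalancedMap α β m => f.1 a = b ∧ f.1 a'' = b).card := by
  simpa [Equiv.swap_apply_of_ne_of_ne ha' ha''] using
    card_filter_comp_perm (m := m) (Equiv.swap a' a'') (fun g => g a = b ∧ g a'' = b)

theorem card_mul_card_filter_apply_eq (a : α) (b : β) :
    Fintype.card α * (univ.filter fun f : BalancedMap α β m => f.1 a = b).card =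
      Fintype.card (BalancedMap α β m) * m := by
  calc Fintype.card α * (univ.filter fun f : BalancedMap α β m => f.1 a = b).card
      = ∑ a', (univ.filter fun f : BalancedMap α β m => f.1 a' = b).card := by
        rw [sum_congr rfl fun a' _ => card_filter_apply_eq_congr a' a b]
        simp
    _ = ∑ f : BalancedMap α β m, (univ.filter fun a' => f.1 a' = b).card := by
        simp only [card_filter]
        exact sum_comm
    _ = Fintype.card (BalancedMap α β m) * m := by simp [fun f : BalancedMap α β m => f.2 b]

theorem card_filter_apply_eq_mul_eq (a a' : α) (ha' : a ≠ a') (b : β) :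
    (univ.filter fun f : BalancedMap α β m => f.1 a = b).card * m =
      (univ.filter fun f : BalancedMap α β m => f.1 a = b).card +
        (Fintype.card α - 1) *
          (univ.filter fun f : BalancedMap α β m => f.1 a = b ∧ f.1 a' = b).card := by
  have hsum : ∑ a'', (univ.filter fun f : BalancedMap α β m => f.1 a = b ∧ f.1 a'' = b).card =
      (univ.filter fun f : BalancedMap α β m => f.1 a = b).card * m := by
    simp only [card_filter, ite_and]
    rw [sum_comm, sum_mul]
    refine sum_congr rfl fun f _ => ?_
    split_ifs <;> simp [f.2]
  rw [← hsum, ← add_sum_erase _ _ (mem_univ a), sum_congr rfl fun a'' ha'' =>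
    card_filter_apply_eq_and_apply_eq_congr (Ne.symm (ne_of_mem_erase ha'')) ha' b]
  simp

theorem card_filter_apply_eq_eq (a : α) (b : β) :
    ((univ.filter fun f : BalancedMap α β m => f.1 a = b).card : ℚ) =
      Fintype.card (BalancedMap α β m) * (m / Fintype.card α) := by
  have hN : (Fintype.card α : ℚ) ≠ 0 := Nat.cast_ne_zero.2 (Fintype.card_pos_iff.2 ⟨a⟩).ne'
  have h := congrArg (Nat.cast : ℕ → ℚ) (card_mul_card_filter_apply_eq (m := m) a b)
  push_cast at h
  rw [mul_div_assoc', eq_div_iff hN, ← h, mul_comm]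

theorem card_filter_apply_eq_and_apply_eq_eq {a a' : α} (ha' : a ≠ a') (b : β) :
    ((univ.filter fun f : BalancedMap α β m => f.1 a = b ∧ f.1 a' = b).card : ℚ) =
      Fintype.card (BalancedMap α β m) *
        (m * (m - 1) / (Fintype.card α * (Fintype.card α - 1))) := by
  have hN : 1 < Fintype.card α := Fintype.one_lt_card_iff.2 ⟨a, a', ha'⟩
  have hN₀ : (Fintype.card α : ℚ) ≠ 0 := by positivity
  have hN₁ : (Fintype.card α : ℚ) - 1 ≠ 0 := sub_ne_zero.2 (by exact_mod_cast hN.ne')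
  have h₁ := card_filter_apply_eq_eq (m := m) a b
  have h₂ := congrArg (Nat.cast : ℕ → ℚ) (card_filter_apply_eq_mul_eq (m := m) a a' ha' b)
  push_cast at h₂
  rw [Nat.cast_sub hN.le, Nat.cast_one, h₁] at h₂
  field_simp at h₂ ⊢
  linear_combination -h₂

end SingleRound

section Rounds

variable {α ι : Type*} [Fintype α] [DecidableEq α] [Fintype ι] [DecidableEq ι]
  {β : ι → Type*} [∀ i, Fintype (β i)] [∀ i, DecidableEq (β i)] (m : ι → ℕ) (v : ∀ i, β i)

theorem sum_card_filter_forall_apply_eq :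
    ∑ g : ∀ i, BalancedMap α (β i) (m i), ((univ.filter fun a => ∀ i, (g i).1 a = v i).card : ℚ) =
      Fintype.card (∀ i, BalancedMap α (β i) (m i)) *
        (Fintype.card α * ∏ i, (m i / Fintype.card α : ℚ)) := by
  have h := congrArg (Nat.cast : ℕ → ℚ)
    (sum_card_filter_forall fun i (f : BalancedMap α (β i) (m i)) a => f.1 a = v i)
  push_cast at h
  simp only [h, card_filter_apply_eq_eq, prod_mul_distrib, sum_const, card_univ, nsmul_eq_mul,
    Fintype.card_pi]
  push_cast
  ring

theorem sum_card_filter_forall_apply_eq_sq :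
    ∑ g : ∀ i, BalancedMap α (β i) (m i),
        ((univ.filter fun a => ∀ i, (g i).1 a = v i).card : ℚ) ^ 2 =
      Fintype.card (∀ i, BalancedMap α (β i) (m i)) *
        (Fintype.card α * ∏ i, (m i / Fintype.card α : ℚ) +
          Fintype.card α * (Fintype.card α - 1) *
            ∏ i, (m i * (m i - 1) / (Fintype.card α * (Fintype.card α - 1)) : ℚ)) := by
  have h := congrArg (Nat.cast : ℕ → ℚ)
    (sum_card_filter_forall_sq fun i (f : BalancedMap α (β i) (m i)) a => f.1 a = v i)
  push_cast at h
  rw [h, sum_sum_eq_of_diag_of_offDiag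
    (d := ∏ i, (Fintype.card (BalancedMap α (β i) (m i)) * (m i / Fintype.card α) : ℚ))
    (e := ∏ i, (Fintype.card (BalancedMap α (β i) (m i)) *
      (m i * (m i - 1) / (Fintype.card α * (Fintype.card α - 1))) : ℚ))
    (fun a => by simp only [and_self, card_filter_apply_eq_eq])
    (fun a a' ha => by simp only [card_filter_apply_eq_and_apply_eq_eq ha])]
  simp only [prod_mul_distrib, Fintype.card_pi]
  push_cast
  ring

theorem average_sub_sq_card_filter_forall_apply_eq
    (hm : ∀ i, Fintype.card α = Fintype.card (β i) * m i) (c : ℚ) :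
    1 / (Fintype.card (∀ i, BalancedMap α (β i) (m i)) : ℚ) *
        ∑ g : ∀ i, BalancedMap α (β i) (m i),
          (((univ.filter fun a => ∀ i, (g i).1 a = v i).card : ℚ) - c) ^ 2 =
      Fintype.card α * ∏ i, (m i / Fintype.card α : ℚ) +
        Fintype.card α * (Fintype.card α - 1) *
          ∏ i, (m i * (m i - 1) / (Fintype.card α * (Fintype.card α - 1)) : ℚ) -
        2 * c * (Fintype.card α * ∏ i, (m i / Fintype.card α : ℚ)) + c ^ 2 := by
  have := fun i => nonempty_of_card_eq (hm i)
  have hS : (Fintype.card (∀ i, BalancedMap α (β i) (m i)) : ℚ) ≠ 0 :=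
    Nat.cast_ne_zero.2 Fintype.card_ne_zero
  rw [sum_sub_sq_eq, sum_card_filter_forall_apply_eq_sq, sum_card_filter_forall_apply_eq]
  field_simp

end Rounds

end BalancedMap

theorem natCast_mul_prod_div_of_eq_mul {ι : Type*} [Fintype ι] {N : ℕ} {n m : ι → ℕ}
    (h : ∀ i, N = n i * m i) :
    (N : ℚ) * ∏ i, (m i / N : ℚ) = N / ∏ i, (n i : ℚ) := by
  rcases eq_or_ne N 0 with rfl | hN
  · simp
  have hnm (i : ι) : (n i : ℚ) ≠ 0 ∧ (m i : ℚ) ≠ 0 := by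
    simpa using (h i ▸ hN : n i * m i ≠ 0)
  have hfactor (i : ι) : (m i / N : ℚ) = 1 / n i := by
    rw [h i, Nat.cast_mul, div_mul_cancel_right₀ (hnm i).2, one_div]
  simp only [hfactor, prod_div_distrib, prod_const_one]
  field_simp

theorem natCast_mul_sub_one_mul_prod_of_eq_mul {ι : Type*} [Fintype ι] {N : ℕ} {n m : ι → ℕ}
    (h : ∀ i, N = n i * m i) :
    (N : ℚ) * (N - 1) * ∏ i, (m i * (m i - 1) / (N * (N - 1)) : ℚ) =
      N * (N - 1) * ∏ i, ((N - n i) / (n i ^ 2 * (N - 1)) : ℚ) := by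
  rcases eq_or_ne ((N : ℚ) * (N - 1)) 0 with hN | hN
  · simp [hN]
  have hn (i : ι) : (n i : ℚ) ≠ 0 := by
    have : (N : ℚ) = n i * m i := by exact_mod_cast h i
    exact left_ne_zero_of_mul (this ▸ left_ne_zero_of_mul hN)
  refine congrArg _ (prod_congr rfl fun i _ => ?_)
  have hN' : (N : ℚ) = n i * m i := by exact_mod_cast h i
  rw [mul_ne_zero_iff] at hN
  rw [div_eq_div_iff (mul_ne_zero hN.1 hN.2) (mul_ne_zero (pow_ne_zero 2 (hn i)) hN.2), hN']
  ring

theorem firstWay_variance_general (r : ℕ) (n : ℕ → ℕ)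
    (N : ℕ) (hdvd : ∀ i ∈ Finset.Icc 1 r, n i ∣ N)
    (v : ∀ i : Fin r, Fin (n (i.val + 1))) :
    (1 : ℚ) / (Fintype.card {f : ∀ i : Fin r, Fin N → Fin (n (i.val + 1)) //
          ∀ (i : Fin r) (a : Fin (n (i.val + 1))),
            (Finset.univ.filter fun k => f i k = a).card = N / n (i.val + 1)} : ℚ) *
        (∑ f : {f : ∀ i : Fin r, Fin N → Fin (n (i.val + 1)) //
            ∀ (i : Fin r) (a : Fin (n (i.val + 1))),
              (Finset.univ.filter fun k => f i k = a).card = N / n (i.val + 1)},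
          (((Finset.univ.filter fun j : Fin N => ∀ i : Fin r, f.1 i j = v i).card : ℚ) -
              (N : ℚ) / ∏ i ∈ Finset.Icc 1 r, (n i : ℚ)) ^ 2) =
      (N : ℚ) / (∏ i ∈ Finset.Icc 1 r, (n i : ℚ)) -
        (N : ℚ) ^ 2 / (∏ i ∈ Finset.Icc 1 r, (n i : ℚ) ^ 2) +
        (N : ℚ) * ((N : ℚ) - 1) *
          ∏ i ∈ Finset.Icc 1 r,
            ((N : ℚ) - (n i : ℚ)) / ((n i : ℚ) ^ 2 * ((N : ℚ) - 1)) := by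
  have hm (i : Fin r) : N = n (i + 1) * (N / n (i + 1)) :=
    (Nat.mul_div_cancel' (hdvd _ (mem_Icc.2 ⟨by omega, i.2⟩))).symm
  let e : _ ≃ ∀ i : Fin r, BalancedMap (Fin N) (Fin (n (i + 1))) (N / n (i + 1)) :=
    Equiv.subtypePiEquivPi
  rw [Fintype.card_congr e, ← e.symm.sum_comp]
  simp only [e, Equiv.subtypePiEquivPi, Equiv.coe_fn_symm_mk]
  convert BalancedMap.average_sub_sq_card_filter_forall_apply_eq (α := Fin N)
    (fun i : Fin r => N / n (i.val + 1)) v (fun i => by simpa using hm i)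
    ((N : ℚ) / ∏ i ∈ Icc 1 r, (n i : ℚ)) using 1
  · -- the two sides differ only in the `Decidable` instance of the fibre condition
    convert rfl
  simp only [Fintype.card_fin, prod_Icc_one_eq_prod_fin, prod_pow]
  rw [natCast_mul_prod_div_of_eq_mul hm, natCast_mul_sub_one_mul_prod_of_eq_mul hm]
  ring

/-- **First Way**, exact variance of the label count:
`(1/|S|) ∑_{f∈S} (α(f) - av)² = N/∏ n_i - N²/∏ n_i² + N(N-1) ∏ (N-n_i)/(n_i²(N-1))`,
where `av = N / ∏ n_i`, as rational numbers. -/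
theorem firstWay_variance (r : ℕ) (hr : 1 ≤ r) (n : ℕ → ℕ)
    (hn : ∀ i ∈ Finset.Icc 1 r, 0 < n i)
    (N : ℕ) (hN : 2 ≤ N) (hdvd : ∀ i ∈ Finset.Icc 1 r, n i ∣ N)
    (hsize : ∀ i ∈ Finset.Icc 1 r, 2 ≤ N / n i)
    (v : ∀ i : Fin r, Fin (n (i.val + 1))) :
    (1 : ℚ) / (Fintype.card {f : ∀ i : Fin r, Fin N → Fin (n (i.val + 1)) //
          ∀ (i : Fin r) (a : Fin (n (i.val + 1))),
            (Finset.univ.filter fun k => f i k = a).card = N / n (i.val + 1)} : ℚ) *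
        (∑ f : {f : ∀ i : Fin r, Fin N → Fin (n (i.val + 1)) //
            ∀ (i : Fin r) (a : Fin (n (i.val + 1))),
              (Finset.univ.filter fun k => f i k = a).card = N / n (i.val + 1)},
          (((Finset.univ.filter fun j : Fin N => ∀ i : Fin r, f.1 i j = v i).card : ℚ) -
              (N : ℚ) / ∏ i ∈ Finset.Icc 1 r, (n i : ℚ)) ^ 2) =
      (N : ℚ) / (∏ i ∈ Finset.Icc 1 r, (n i : ℚ)) -
        (N : ℚ) ^ 2 / (∏ i ∈ Finset.Icc 1 r, (n i : ℚ) ^ 2) +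
        (N : ℚ) * ((N : ℚ) - 1) *
          ∏ i ∈ Finset.Icc 1 r,
            ((N : ℚ) - (n i : ℚ)) / ((n i : ℚ) ^ 2 * ((N : ℚ) - 1)) :=
  firstWay_variance_general r n N hdvd v
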